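/- For all integers 1 ≤ m ≤ n and every real p ∈ [0,1], the values Q_{m,n,p}(j) sum to one: Σ_{j=1}^{n} Q_{m,n,p}(j) = 1. -/

import Mathlib

/-- `T m n s = C(m-1,s)·(n-s)^(m-s-2)·(s+1)^(s-1)` in `ℝ`, with integer (possibly
negative) exponents interpreted via `zpow`. -/
noncomputable def T (m n s : ℕ) : ℝ :=
  ((m - 1).choose s : ℝ) * ((n : ℝ) - s) ^ ((m : ℤ) - s - 2) * ((s : ℝ) + 1) ^ ((s : ℤ) - 1)

/-- `Q m n p j` is the conditional probability that the last of `m` cars prefers spot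
`j ∈ {1,…,n}` given that all cars park, in the probabilistic parking model on `n` spots
with forward-probability `p` (Theorem 3 of Durmić–Han–Harris–Ribeiro–Yin):
`Q_{m,n,p}(j) = (n-m+2)/((n-m+1)(n+1)) − (1/(n+1)^(m-1))·
  [ p·Σ_{s=n-j+1}^{m-1} T(s) + (1-p)·Σ_{s=j}^{m-1} T(s) ]`. -/
noncomputable def Q (m n : ℕ) (p : ℝ) (j : ℕ) : ℝ :=
  ((n : ℝ) - m + 2) / (((n : ℝ) - m + 1) * ((n : ℝ) + 1)) -
    1 / ((n : ℝ) + 1) ^ (m - 1) *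
      (p * ∑ s ∈ Finset.Icc (n - j + 1) (m - 1), T m n s +
        (1 - p) * ∑ s ∈ Finset.Icc j (m - 1), T m n s)

/-- Total variation distance between `Q m n p` and the uniform distribution on `{1,…,n}`:
`(1/2)·Σ_{j=1}^n |Q_{m,n,p}(j) − 1/n|`. -/
noncomputable def tvUni (m n : ℕ) (p : ℝ) : ℝ :=
  1 / 2 * ∑ j ∈ Finset.Icc 1 n, |Q m n p j - 1 / (n : ℝ)|

/-!
Summing over `j` and exchanging the order of summation turns both inner sums of `Q` into
`Σ_{s=1}^{m-1} s·T(s)`, so `p` drops out. Reindexing by `s = m - 1 - t` and writing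
`x = n - m + 1`, this weighted sum becomes `(m-1)/x` times the left side of Abel's identity
`Σ_t C(k,t)·x(x+t)^{t-1}·(y+k-t)^{k-t} = (y+x+k)^k` at `k = m - 2`, `y = 2`, hence equals
`(m-1)(n+1)^{m-2}/x`; what is left is `n(n-m+2) - (m-1) = (n+1)(n-m+1)`.

Abel's identity is proved as a polynomial identity in `y` by induction on `k`: both sides `P_k`
satisfy `P_{k+1}' = (k+1)·P_k(y+1)`, and both vanish at `y = -(x+k+1)`, the left side because
there it is `x` times an alternating `(k+1)`-st finite difference of `(x+t)^k`.
-/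

open Finset

theorem sum_alternating_choose_mul_add_pow_eq_zero {R : Type*} [CommRing R] {j n : ℕ}
    (h : j < n) (x : R) :
    ∑ t ∈ range (n + 1), (-1 : R) ^ (n - t) * n.choose t * (x + t) ^ j = 0 := by
  have := fwdDiff_iter_eq_sum_shift 1 (fun r : R ↦ r ^ j) n x
  rw [fwdDiff_iter_pow_eq_zero_of_lt h] at this
  simpa [zsmul_eq_mul, mul_assoc] using this.symm

section Abel

open Polynomial

variable {K : Type*} [Field K]

/-- The `t = 0` coefficient is `x * x⁻¹`, which is `1` only for `x ≠ 0`. -/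
noncomputable def abelCoeff (x : K) (k t : ℕ) : K :=
  k.choose t * (x * (x + t) ^ ((t : ℤ) - 1))

noncomputable def abelSum (x : K) (k : ℕ) : K[X] :=
  ∑ t ∈ range (k + 1), C (abelCoeff x k t) * (X + C ((k - t : ℕ) : K)) ^ (k - t)

theorem abelCoeff_mul_pow {x : K} (hx : x ≠ 0) {k t : ℕ} (ht : t ≤ k + 1) :
    abelCoeff x (k + 1) t * (x + t) ^ (k + 1 - t) = x * ((k + 1).choose t * (x + t) ^ k) := by
  rcases t with _ | s
  · simp [abelCoeff, hx, pow_succ']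
  · have hexp : ((s + 1 : ℕ) : ℤ) - 1 = s := by push_cast; ring
    have hpow : (x + ((s + 1 : ℕ) : K)) ^ s * (x + ((s + 1 : ℕ) : K)) ^ (k + 1 - (s + 1)) =
        (x + ((s + 1 : ℕ) : K)) ^ k := by
      rw [← pow_add]; congr 1; omega
    rw [abelCoeff, hexp, zpow_natCast]
    linear_combination ((k + 1).choose (s + 1) * x : K) * hpow

theorem derivative_abelSum (x : K) (k : ℕ) :
    derivative (abelSum x (k + 1)) = C ((k : K) + 1) * (abelSum x k).comp (X + 1) := by
  rw [abelSum, abelSum, derivative_sum, sum_range_succ, Polynomial.sum_comp, mul_sum]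
  simp only [Nat.sub_self, derivative_mul, derivative_C, zero_mul, zero_add, pow_zero,
    derivative_one, mul_zero, add_zero]
  refine sum_congr rfl fun t ht ↦ ?_
  have ht : t ≤ k := Nat.lt_succ_iff.mp (mem_range.mp ht)
  have hchoose : ((k + 1).choose t : K) * ((k - t + 1 : ℕ) : K) = (k + 1) * k.choose t := by
    rw [← Nat.cast_mul, show k - t + 1 = k + 1 - t by omega, ← Nat.choose_mul_succ_eq]
    push_cast; ring
  have hshift : X + C ((k - t + 1 : ℕ) : K) = X + C (1 + ((k - t : ℕ) : K)) := by
    rw [Nat.cast_succ, add_comm ((k - t : ℕ) : K)]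
  rw [derivative_pow, derivative_X_add_C, show k + 1 - t - 1 = k - t by omega, mul_comp, C_comp,
    pow_comp, add_comp, X_comp, C_comp, add_assoc, ← C_1, ← C_add,
    show k + 1 - t = k - t + 1 by omega, hshift, C_1, mul_one, ← mul_assoc, ← C_mul,
    ← mul_assoc, ← C_mul, abelCoeff, abelCoeff]
  congr 2
  linear_combination (x * (x + t) ^ ((t : ℤ) - 1)) * hchoose

theorem abelSum_eval_neg {x : K} (hx : x ≠ 0) (k : ℕ) :
    (abelSum x (k + 1)).eval (-(x + (k + 1))) = 0 := by
  have hterm : ∀ t ∈ range (k + 2), (C (abelCoeff x (k + 1) t) *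
      (X + C ((k + 1 - t : ℕ) : K)) ^ (k + 1 - t)).eval (-(x + (k + 1))) =
      x * ((-1) ^ (k + 1 - t) * (k + 1).choose t * (x + t) ^ k) := by
    intro t ht
    have ht : t ≤ k + 1 := Nat.lt_succ_iff.mp (mem_range.mp ht)
    have hbase : -(x + (k + 1)) + ((k + 1 - t : ℕ) : K) = -1 * (x + t) := by
      push_cast [Nat.cast_sub ht]; ring
    rw [eval_mul, eval_C, eval_pow, eval_add, eval_X, eval_C, hbase, mul_pow,
      mul_left_comm, abelCoeff_mul_pow hx ht]
    ring
  rw [abelSum, eval_finsetSum, sum_congr rfl hterm, ← mul_sum,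
    sum_alternating_choose_mul_add_pow_eq_zero k.lt_succ_self, mul_zero]

theorem abelSum_eq [CharZero K] {x : K} (hx : x ≠ 0) (k : ℕ) :
    abelSum x k = (X + C (x + k)) ^ k := by
  induction k with
  | zero =>
    rw [abelSum, sum_range_one, abelCoeff]
    simp [hx]
  | succ k ih =>
    set D := abelSum x (k + 1) - (X + C (x + ↑(k + 1))) ^ (k + 1)
    have hshift : (X + C (x + k)).comp (X + 1) = X + C (x + ↑(k + 1)) := by
      simp only [add_comp, X_comp, C_comp, Nat.cast_succ, C_add, C_1]; ring
    have hD : derivative D = 0 := by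
      rw [derivative_sub, derivative_abelSum, ih, pow_comp, hshift, derivative_pow,
        derivative_X_add_C, Nat.add_sub_cancel, mul_one, Nat.cast_succ, sub_self]
    have hD_eval : D.eval (-(x + (k + 1))) = 0 := by
      rw [eval_sub, abelSum_eval_neg hx]
      simp
    rw [eq_C_of_derivative_eq_zero hD, eval_C] at hD_eval
    rw [← sub_eq_zero, ← map_zero C, ← hD_eval, ← eq_C_of_derivative_eq_zero hD]

theorem sum_abelCoeff_mul_pow [CharZero K] {x : K} (hx : x ≠ 0) (k : ℕ) (y : K) :
    ∑ t ∈ range (k + 1), abelCoeff x k t * (y + (k - t : ℕ)) ^ (k - t) = (y + x + k) ^ k := by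
  simpa [abelSum, eval_finsetSum, add_assoc] using congrArg (eval y) (abelSum_eq hx k)

end Abel

section SumSwap

variable {M : Type*} [AddCommMonoid M]

theorem sum_Icc_one_reflect (g : ℕ → M) (n : ℕ) :
    ∑ j ∈ Icc 1 n, g (n - j + 1) = ∑ j ∈ Icc 1 n, g j :=
  sum_nbij' (fun j ↦ n - j + 1) (fun j ↦ n - j + 1)
    (fun j hj ↦ by simp only [mem_Icc] at hj ⊢; omega)
    (fun j hj ↦ by simp only [mem_Icc] at hj ⊢; omega)
    (fun j hj ↦ by simp only [mem_Icc] at hj; omega)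
    (fun j hj ↦ by simp only [mem_Icc] at hj; omega) fun _ _ ↦ rfl

theorem sum_Icc_one_sum_Icc (f : ℕ → M) {b n : ℕ} (h : b ≤ n) :
    ∑ j ∈ Icc 1 n, ∑ s ∈ Icc j b, f s = ∑ s ∈ Icc 1 b, s • f s := by
  rw [sum_comm' (t' := Icc 1 b) (s' := fun s ↦ Icc 1 s) fun j s ↦ by simp only [mem_Icc]; omega]
  simp

theorem sum_Icc_one_sum_Icc_reflect (f : ℕ → M) {b n : ℕ} (h : b ≤ n) :
    ∑ j ∈ Icc 1 n, ∑ s ∈ Icc (n - j + 1) b, f s = ∑ s ∈ Icc 1 b, s • f s := by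
  rw [sum_Icc_one_reflect (fun j ↦ ∑ s ∈ Icc j b, f s), sum_Icc_one_sum_Icc f h]

end SumSwap

theorem mul_natCast_mul_T_eq_abelCoeff (n k t : ℕ) (ht : t ≤ k) :
    ((n : ℝ) - k - 1) * (((k + 1 - t : ℕ) : ℝ) * T (k + 2) n (k + 1 - t)) =
      (k + 1) * (abelCoeff ((n : ℝ) - k - 1) k t * (2 + (k - t : ℕ)) ^ (k - t)) := by
  have hchoose : ((k + 1 - t : ℕ) : ℝ) * (k + 1).choose (k + 1 - t) = (k + 1) * k.choose t := by
    have h := Nat.add_one_mul_choose_eq k (k - t)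
    rw [Nat.choose_symm ht, show k - t + 1 = k + 1 - t by omega] at h
    exact_mod_cast (mul_comm _ _).trans h.symm
  have hbase : (n : ℝ) - ((k + 1 - t : ℕ) : ℝ) = (n - k - 1) + t := by
    push_cast [Nat.cast_sub (by omega : t ≤ k + 1)]; ring
  have hexp : ((k + 2 : ℕ) : ℤ) - ((k + 1 - t : ℕ) : ℤ) - 2 = (t : ℤ) - 1 := by omega
  have hbase' : ((k + 1 - t : ℕ) : ℝ) + 1 = 2 + (k - t : ℕ) := by
    push_cast [Nat.cast_sub ht, Nat.cast_sub (by omega : t ≤ k + 1)]; ring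
  have hexp' : ((k + 1 - t : ℕ) : ℤ) - 1 = ((k - t : ℕ) : ℤ) := by omega
  rw [T, hbase, hexp, hbase', hexp', zpow_natCast, abelCoeff, show k + 2 - 1 = k + 1 by omega]
  linear_combination ((n - k - 1 + t : ℝ) ^ ((t : ℤ) - 1) * (2 + (k - t : ℕ)) ^ (k - t) *
    (n - k - 1)) * hchoose

theorem mul_sum_natCast_mul_T {m n : ℕ} (hm : 1 ≤ m) (hmn : m ≤ n) :
    ((n : ℝ) - m + 1) * ((n : ℝ) + 1) * ∑ s ∈ Icc 1 (m - 1), (s : ℝ) * T m n s =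
      ((m : ℝ) - 1) * ((n : ℝ) + 1) ^ (m - 1) := by
  obtain rfl | ⟨k, rfl⟩ : m = 1 ∨ ∃ k, m = k + 2 := by
    rcases m with _ | _ | k <;> simp_all
  · simp
  have hx : (n : ℝ) - k - 1 ≠ 0 := by
    have : ((k + 2 : ℕ) : ℝ) ≤ n := by exact_mod_cast hmn
    push_cast at this
    linarith
  have hreflect : ∑ s ∈ Icc 1 (k + 1), (s : ℝ) * T (k + 2) n s =
      ∑ t ∈ range (k + 1), ((k + 1 - t : ℕ) : ℝ) * T (k + 2) n (k + 1 - t) :=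
    sum_nbij' (fun s ↦ k + 1 - s) (fun t ↦ k + 1 - t)
      (fun s hs ↦ by simp only [mem_Icc, mem_range] at hs ⊢; omega)
      (fun t ht ↦ by simp only [mem_Icc, mem_range] at ht ⊢; omega)
      (fun s hs ↦ by simp only [mem_Icc] at hs; omega)
      (fun t ht ↦ by simp only [mem_range] at ht; omega)
      fun s hs ↦ by rw [Nat.sub_sub_self (mem_Icc.mp hs).2]
  calc ((n : ℝ) - (k + 2 : ℕ) + 1) * ((n : ℝ) + 1) *
        ∑ s ∈ Icc 1 (k + 2 - 1), (s : ℝ) * T (k + 2) n s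
      = ((n : ℝ) + 1) * ∑ t ∈ range (k + 1), ((n : ℝ) - k - 1) *
          (((k + 1 - t : ℕ) : ℝ) * T (k + 2) n (k + 1 - t)) := by
        rw [show k + 2 - 1 = k + 1 by omega, hreflect, ← mul_sum]; push_cast; ring
    _ = ((n : ℝ) + 1) * ((k + 1) * (2 + ((n : ℝ) - k - 1) + k) ^ k) := by
        rw [sum_congr rfl fun t ht ↦ mul_natCast_mul_T_eq_abelCoeff n k t
          (Nat.lt_succ_iff.mp (mem_range.mp ht)), ← mul_sum, sum_abelCoeff_mul_pow hx]
    _ = ((k + 2 : ℕ) - 1) * ((n : ℝ) + 1) ^ (k + 2 - 1) := by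
        rw [show k + 2 - 1 = k + 1 by omega]; push_cast; ring

theorem Q_sum_to_one_general (m n : ℕ) (hm : 1 ≤ m) (hmn : m ≤ n)
    (p : ℝ) :
    ∑ j ∈ Finset.Icc 1 n, Q m n p j = 1 := by
  have hx : (n : ℝ) - m + 1 ≠ 0 := by
    have : (m : ℝ) ≤ n := by exact_mod_cast hmn
    linarith
  have hn : (n : ℝ) + 1 ≠ 0 := by positivity
  have hA := mul_sum_natCast_mul_T hm hmn
  simp only [Q]
  rw [sum_sub_distrib, sum_const, Nat.card_Icc, ← mul_sum, sum_add_distrib, ← mul_sum, ← mul_sum,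
    sum_Icc_one_sum_Icc_reflect _ (by omega), sum_Icc_one_sum_Icc _ (by omega)]
  simp only [nsmul_eq_mul, Nat.add_sub_cancel]
  field_simp
  linear_combination -hA

/-- For `1 ≤ m ≤ n` and `p ∈ [0,1]`, the values `Q_{m,n,p}(j)` sum to one:
`Σ_{j=1}^n Q_{m,n,p}(j) = 1`. -/
theorem Q_sum_to_one (m n : ℕ) (hm : 1 ≤ m) (hmn : m ≤ n)
    (p : ℝ) (hp0 : 0 ≤ p) (hp1 : p ≤ 1) :
    ∑ j ∈ Finset.Icc 1 n, Q m n p j = 1 :=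
  Q_sum_to_one_general m n hm hmn p
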